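/- arXiv:math/0408216 — 2 statements merged into one kernel-verified Lean document; each statement's English description precedes it below -/
import Mathlib

section
/- Let (X,∂) ⇄ (Y,d) with maps ∇, f and homotopy φ be a strong deformation retract of chain complexes such that (X,∂,Δ_X) and (Y,d,Δ_Y) are coassociative chain coalgebras and ∇ is a map of coalgebras (Eilenberg–Zilber data). Then the degree +1 map H := (f⊗f) ∘ Δ_Y ∘ φ : Y → X⊗X satisfies (d⊗1 + 1⊗d)H + Hd = Δ_X ∘ f − (f⊗f) ∘ Δ_Y; in particular f is a map of coalgebras up to chain homotopy. -/
/-!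
Applying the chain map `(f ⊗ f) ∘ Δ_Y` to the homotopy relation `dφ + φd = ∇f − 1` gives
`(d⊗1 + 1⊗d) H + H d = (f ⊗ f) Δ_Y ∇ f − (f ⊗ f) Δ_Y`, and since `∇` is a coalgebra map
with `f∇ = 1`, `(f ⊗ f) Δ_Y ∇ = (f∇ ⊗ f∇) Δ_X = Δ_X`.
-/

open CategoryTheory Simplicial DirectSum

set_option maxHeartbeats 1000000
set_option synthInstance.maxHeartbeats 200000
set_option linter.unusedVariables false

noncomputable section

/-- An ℕ-graded chain complex of abelian groups, in "total" form: a single abelian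
group together with an internal grading and a differential of degree `-1`. -/
structure GCx : Type 1 where
  X : Type
  [inst : AddCommGroup X]
  gr : ℕ → AddSubgroup X
  internal : DirectSum.IsInternal gr
  d : X →+ X
  d_gr : ∀ n, ∀ x ∈ gr (n + 1), d x ∈ gr n
  d_gr0 : ∀ x ∈ gr 0, d x = 0
  dd : ∀ x, d (d x) = 0

attribute [instance] GCx.inst

namespace GCx

def dec (A : GCx) : A.X →+ ⨁ n, A.gr n :=
  (AddEquiv.ofBijective (DirectSum.coeAddMonoidHom A.gr) A.internal).symm.toAddMonoidHom

/-- The operator multiplying a homogeneous element of degree `n` by `c n`. -/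
def sgn (A : GCx) (c : ℕ → ℤ) : A.X →+ A.X :=
  (DirectSum.toAddMonoid fun n =>
    AddMonoidHom.mk' (fun x : A.gr n => c n • (x : A.X))
      (fun a b => by simp [smul_add])).comp A.dec

/-- The Koszul sign operator `x ↦ (-1)^{|x|} x`. -/
def eps (A : GCx) : A.X →+ A.X := A.sgn fun n => (-1) ^ n

end GCx

def IsChainMap (A B : GCx) (f : A.X →+ B.X) : Prop :=
  (∀ n, ∀ x ∈ A.gr n, f x ∈ B.gr n) ∧ ∀ x, f (A.d x) = B.d (f x)

def IsDegreePlusOne (A B : GCx) (h : A.X →+ B.X) : Prop :=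
  ∀ n, ∀ x ∈ A.gr n, h x ∈ B.gr (n + 1)

def IsHomotopyFromTo (A B : GCx) (h f g : A.X →+ B.X) : Prop :=
  ∀ x, B.d (h x) + h (A.d x) = f x - g x

def mkBi {A B Z : Type} [AddCommGroup A] [AddCommGroup B] [AddCommGroup Z]
    (F : A → B → Z) (hA : ∀ a a' b, F (a + a') b = F a b + F a' b)
    (hB : ∀ a b b', F a (b + b') = F a b + F a b') : A →+ B →+ Z :=
  AddMonoidHom.mk' (fun a => AddMonoidHom.mk' (F a) (hB a))
    (fun a a' => by ext b; simp [hA])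

@[simp] lemma mkBi_apply {A B Z : Type} [AddCommGroup A] [AddCommGroup B] [AddCommGroup Z]
    (F : A → B → Z) (hA) (hB) (a : A) (b : B) : mkBi F hA hB a b = F a b := rfl

def bicomp {A A' B B' Z : Type} [AddCommGroup A] [AddCommGroup A'] [AddCommGroup B]
    [AddCommGroup B'] [AddCommGroup Z] (f : A →+ B →+ Z) (g : A' →+ A) (h : B' →+ B) :
    A' →+ B' →+ Z :=
  mkBi (fun a b => f (g a) (h b)) (fun a a' b => by simp) (fun a b b' => by simp)

/-- An abstract tensor product of graded chain complexes: a bi-additive structure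
map satisfying the graded Leibniz rule and the universal property of the tensor
product of the underlying abelian groups. -/
structure TensorCx (A B T : GCx) : Type 1 where
  tmul : A.X →+ B.X →+ T.X
  tmul_gr : ∀ p q a b, a ∈ A.gr p → b ∈ B.gr q → tmul a b ∈ T.gr (p + q)
  d_tmul : ∀ p a, a ∈ A.gr p → ∀ b,
    T.d (tmul a b) = tmul (A.d a) b + ((-1 : ℤ) ^ p) • tmul a (B.d b)
  up : ∀ (Z : Type) [AddCommGroup Z] (g : A.X →+ B.X →+ Z),
      ∃! h : T.X →+ Z, ∀ a b, h (tmul a b) = g a b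

def TensorCx.lift {A B T : GCx} (tt : TensorCx A B T) {Z : Type} [AddCommGroup Z]
    (g : A.X →+ B.X →+ Z) : T.X →+ Z := (tt.up Z g).exists.choose

/-- The tensor product `f ⊗ g` of two (degree zero) maps. -/
def TensorCx.map {A B T A' B' T' : GCx} (tt : TensorCx A B T) (tt' : TensorCx A' B' T')
    (f : A.X →+ A'.X) (g : B.X →+ B'.X) : T.X →+ T'.X := tt.lift (bicomp tt'.tmul f g)

/-- `twistBi A B s f` is the bi-additive map `(a, b) ↦ Σ s p q • f a_p b_q`, where
`a_p`, `b_q` are the homogeneous components; used to introduce Koszul signs. -/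
def twistBi (A B : GCx) {Z : Type} [AddCommGroup Z] (s : ℕ → ℕ → ℤ)
    (f : A.X →+ B.X →+ Z) : A.X →+ B.X →+ Z :=
  (DirectSum.toAddMonoid fun p =>
    (AddMonoidHom.mk' (fun φ : B.X →+ Z => φ.comp (B.sgn (s p)))
      (fun φ ψ => by ext b; simp)).comp (f.comp (A.gr p).subtype)).comp A.dec

lemma GCx.addMonoidHom_ext (A : GCx) {Z : Type} [AddCommGroup Z] {g₁ g₂ : A.X →+ Z}
    (h : ∀ p, ∀ x ∈ A.gr p, g₁ x = g₂ x) : g₁ = g₂ := by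
  ext x
  obtain ⟨z, rfl⟩ := A.internal.surjective x
  refine DFunLike.congr_fun (DirectSum.addHom_ext fun p xp => ?_ :
    g₁.comp (DirectSum.coeAddMonoidHom A.gr) = g₂.comp (DirectSum.coeAddMonoidHom A.gr)) z
  simpa using h p xp xp.2

namespace TensorCx

variable {A B T A' B' T' A'' B'' T'' : GCx}

lemma lift_tmul_s13 (tt : TensorCx A B T) {Z : Type} [AddCommGroup Z] (g : A.X →+ B.X →+ Z)
    (a : A.X) (b : B.X) : tt.lift g (tt.tmul a b) = g a b :=
  (tt.up Z g).exists.choose_spec a b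

lemma hom_ext (tt : TensorCx A B T) {Z : Type} [AddCommGroup Z] {g₁ g₂ : T.X →+ Z}
    (h : ∀ a b, g₁ (tt.tmul a b) = g₂ (tt.tmul a b)) : g₁ = g₂ :=
  (tt.up Z (mkBi (fun a b => g₁ (tt.tmul a b)) (fun a a' b => by simp)
    (fun a b b' => by simp))).unique (fun _ _ => rfl) (fun a b => (h a b).symm)

lemma map_tmul (tt : TensorCx A B T) (tt' : TensorCx A' B' T') (f : A.X →+ A'.X)
    (g : B.X →+ B'.X) (a : A.X) (b : B.X) :
    tt.map tt' f g (tt.tmul a b) = tt'.tmul (f a) (g b) :=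
  lift_tmul_s13 tt _ a b

lemma map_id (tt : TensorCx A B T) (t : T.X) :
    tt.map tt (AddMonoidHom.id _) (AddMonoidHom.id _) t = t :=
  DFunLike.congr_fun (tt.hom_ext (g₂ := AddMonoidHom.id _) fun a b => map_tmul ..) t

lemma map_map (tt : TensorCx A B T) (tt' : TensorCx A' B' T') (tt'' : TensorCx A'' B'' T'')
    (f : A.X →+ A'.X) (g : B.X →+ B'.X) (f' : A'.X →+ A''.X) (g' : B'.X →+ B''.X) (t : T.X) :
    tt'.map tt'' f' g' (tt.map tt' f g t) = tt.map tt'' (f'.comp f) (g'.comp g) t := by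
  refine DFunLike.congr_fun (tt.hom_ext (g₁ := (tt'.map tt'' f' g').comp (tt.map tt' f g))
    fun a b => ?_) t
  simp only [AddMonoidHom.comp_apply, map_tmul]

/-- `f` must preserve degrees for the Koszul sign `(-1)^|a|` of the Leibniz rule to match
on both sides. -/
lemma d_map (tt : TensorCx A B T) (tt' : TensorCx A' B' T') {f : A.X →+ A'.X}
    {g : B.X →+ B'.X} (hf : IsChainMap A A' f) (hg : ∀ b, g (B.d b) = B'.d (g b)) (t : T.X) :
    T'.d (tt.map tt' f g t) = tt.map tt' f g (T.d t) := by
  refine DFunLike.congr_fun (tt.hom_ext (g₁ := T'.d.comp (tt.map tt' f g))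
    (g₂ := (tt.map tt' f g).comp T.d) fun a b => ?_) t
  refine DFunLike.congr_fun (A.addMonoidHom_ext (g₁ := (T'.d.comp (tt.map tt' f g)).comp
    (tt.tmul.flip b)) (g₂ := ((tt.map tt' f g).comp T.d).comp (tt.tmul.flip b))
    fun p x hx => ?_) a
  simp only [AddMonoidHom.comp_apply, AddMonoidHom.flip_apply]
  rw [map_tmul, tt'.d_tmul p (f x) (hf.1 p x hx), tt.d_tmul p x hx, map_add, map_zsmul,
    map_tmul, map_tmul, hf.2, hg]

end TensorCx

lemma IsHomotopyFromTo.comp_left {A B C : GCx} {h u v : A.X →+ B.X}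
    (H : IsHomotopyFromTo A B h u v) {G : B.X →+ C.X} (hG : ∀ b, C.d (G b) = G (B.d b)) :
    IsHomotopyFromTo A C (G.comp h) (G.comp u) (G.comp v) := fun x => by
  simp only [AddMonoidHom.comp_apply]
  rw [hG, ← map_add, H x, map_sub]

theorem statement13_general
    (X Y : GCx)
    -- the tensor squares of `X` and of `Y`
    (TX TY : GCx) (ttX : TensorCx X X TX) (ttY : TensorCx Y Y TY)
    -- the coalgebra structures
    (comulX : X.X →+ TX.X)
    (comulY : Y.X →+ TY.X) (hcomulY : IsChainMap Y TY comulY)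
    -- the strong deformation retract
    (nab : X.X →+ Y.X)
    (f : Y.X →+ X.X) (hf : IsChainMap Y X f)
    (φ : Y.X →+ Y.X)
    (hret : ∀ x, f (nab x) = x)
    (hhtp : ∀ y, Y.d (φ y) + φ (Y.d y) = nab (f y) - y)
    -- `∇` is a map of coalgebras
    (hnabcoalg : ∀ x, comulY (nab x) = (TensorCx.map ttX ttY nab nab) (comulX x)) :
    ∀ y : Y.X,
      TX.d ((TensorCx.map ttY ttX f f) (comulY (φ y)))
        + (TensorCx.map ttY ttX f f) (comulY (φ (Y.d y)))
      = comulX (f y) - (TensorCx.map ttY ttX f f) (comulY y) := by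
  set G := (ttY.map ttX f f).comp comulY
  have hG : ∀ y, TX.d (G y) = G (Y.d y) := fun y => by
    simp only [G, AddMonoidHom.comp_apply, TensorCx.d_map ttY ttX hf hf.2, hcomulY.2]
  have hGnab : ∀ x, G (nab x) = comulX x := fun x => by
    have hfnab : f.comp nab = AddMonoidHom.id _ := AddMonoidHom.ext hret
    simp only [G, AddMonoidHom.comp_apply, hnabcoalg, TensorCx.map_map, hfnab,
      TensorCx.map_id]
  intro y
  simpa only [G, AddMonoidHom.comp_apply, AddMonoidHom.id_apply, hGnab] using
    (IsHomotopyFromTo.comp_left (u := nab.comp f) (v := AddMonoidHom.id _) hhtp hG) y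

theorem statement13
    (X Y : GCx)
    -- the tensor squares of `X` and of `Y`
    (TX TY : GCx) (ttX : TensorCx X X TX) (ttY : TensorCx Y Y TY)
    -- the coalgebra structures
    (comulX : X.X →+ TX.X) (hcomulX : IsChainMap X TX comulX)
    (comulY : Y.X →+ TY.X) (hcomulY : IsChainMap Y TY comulY)
    -- coassociativity of `Δ_X`, via a strictly associative triple tensor product
    (T3X : GCx) (ttLX : TensorCx TX X T3X) (ttRX : TensorCx X TX T3X)
    (hXassoc : ∀ a b c, ttLX.tmul (ttX.tmul a b) c = ttRX.tmul a (ttX.tmul b c))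
    (hXcoassoc : ∀ x, (ttX.lift (bicomp ttLX.tmul comulX (AddMonoidHom.id _))) (comulX x)
      = (ttX.lift (bicomp ttRX.tmul (AddMonoidHom.id _) comulX)) (comulX x))
    -- coassociativity of `Δ_Y`
    (T3Y : GCx) (ttLY : TensorCx TY Y T3Y) (ttRY : TensorCx Y TY T3Y)
    (hYassoc : ∀ a b c, ttLY.tmul (ttY.tmul a b) c = ttRY.tmul a (ttY.tmul b c))
    (hYcoassoc : ∀ y, (ttY.lift (bicomp ttLY.tmul comulY (AddMonoidHom.id _))) (comulY y)
      = (ttY.lift (bicomp ttRY.tmul (AddMonoidHom.id _) comulY)) (comulY y))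
    -- the strong deformation retract
    (nab : X.X →+ Y.X) (hnab : IsChainMap X Y nab)
    (f : Y.X →+ X.X) (hf : IsChainMap Y X f)
    (φ : Y.X →+ Y.X) (hφdeg : IsDegreePlusOne Y Y φ)
    (hret : ∀ x, f (nab x) = x)
    (hhtp : ∀ y, Y.d (φ y) + φ (Y.d y) = nab (f y) - y)
    (hφnab : ∀ x, φ (nab x) = 0)
    (hfφ : ∀ y, f (φ y) = 0)
    (hφφ : ∀ y, φ (φ y) = 0)
    -- `∇` is a map of coalgebras
    (hnabcoalg : ∀ x, comulY (nab x) = (TensorCx.map ttX ttY nab nab) (comulX x)) :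
    ∀ y : Y.X,
      TX.d ((TensorCx.map ttY ttX f f) (comulY (φ y)))
        + (TensorCx.map ttY ttX f f) (comulY (φ (Y.d y)))
      = comulX (f y) - (TensorCx.map ttY ttX f f) (comulY y) :=
  statement13_general X Y TX TY ttX ttY comulX comulY hcomulY nab f hf φ hret hhtp hnabcoalg
end
end

section
/- Let t : C → A and t′ : C′ → A′ be twisting cochains, where C, C′ are counital chain coalgebras with counits ε : C → ℤ, ε′ : C′ → ℤ, and A, A′ are unital chain algebras with units η : ℤ → A, η′ : ℤ → A′. Then t * t′ := t⊗η′ε′ + ηε⊗t′ : C⊗C′ → A⊗A′ is a twisting cochain from the tensor product coalgebra C⊗C′ to the tensor product algebra A⊗A′. -/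
open CategoryTheory Simplicial DirectSum

set_option maxHeartbeats 1000000
set_option synthInstance.maxHeartbeats 200000
set_option linter.unusedVariables false

noncomputable section

/-- A (unital, associative) differential graded algebra over ℤ, in total form. -/
structure GAlg : Type 1 extends GCx where
  one : toGCx.X
  mul : toGCx.X →+ toGCx.X →+ toGCx.X
  one_gr : one ∈ gr 0
  mul_gr : ∀ p q a b, a ∈ gr p → b ∈ gr q → mul a b ∈ gr (p + q)
  one_mul : ∀ a, mul one a = a
  mul_one : ∀ a, mul a one = a
  mul_assoc : ∀ a b c, mul (mul a b) c = mul a (mul b c)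
  leibniz : ∀ p a, a ∈ gr p → ∀ b,
    d (mul a b) = mul (d a) b + ((-1 : ℤ) ^ p) • mul a (d b)

/-- The data of a map of (graded) algebras: an additive map preserving `1` and
multiplication. -/
structure AlgMapData (A B : GAlg) : Type where
  f : A.X →+ B.X
  map_one : f A.one = B.one
  map_mul : ∀ a b, f (A.mul a b) = B.mul (f a) (f b)

/-- `h` is an `(F, G)`-derivation:  `h(ab) = h(a)G(b) + (-1)^{|a|}F(a)h(b)`. -/
def IsDerivation (A B : GAlg) (F G : A.X →+ B.X) (h : A.X →+ B.X) : Prop :=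
  ∀ p a, a ∈ A.gr p → ∀ b,
    h (A.mul a b) = B.mul (h a) (G b) + ((-1 : ℤ) ^ p) • B.mul (F a) (h b)

/-- `h` is a derivation homotopy from the algebra map `F` to the algebra map `G`. -/
def IsDerivationHomotopy (A B : GAlg) (F G : A.X →+ B.X) (h : A.X →+ B.X) : Prop :=
  IsDegreePlusOne A.toGCx B.toGCx h ∧
  IsHomotopyFromTo A.toGCx B.toGCx h F G ∧
  IsDerivation A B F G h

/-- An abstract tensor product of two graded algebras: a tensor product of the
underlying complexes, whose multiplication is given by the graded (Koszul) rule. -/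
structure TensorAlgStr (A B T : GAlg) : Type 1 extends TensorCx A.toGCx B.toGCx T.toGCx where
  one_tmul : T.one = tmul A.one B.one
  mul_tmul : ∀ q b, b ∈ B.gr q → ∀ p' a', a' ∈ A.gr p' → ∀ a b',
    T.mul (tmul a b) (tmul a' b') = ((-1 : ℤ) ^ (q * p')) • tmul (A.mul a a') (B.mul b b')

/-- An abstract model for the cobar construction `Ω C` of a connected coaugmented
chain coalgebra `C`, as a graded algebra: it is free (as a graded algebra) on the
desuspension of the positive-degree part of `C`, via the generator map `gen = s⁻¹`. -/
structure FreeAlgOver (C : GCx) : Type 1 where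
  A : GAlg
  gen : C.X →+ A.X
  gen_gr : ∀ n, ∀ x ∈ C.gr (n + 1), gen x ∈ A.gr n
  gen_gr0 : ∀ x ∈ C.gr 0, gen x = 0
  free : ∀ (B : GAlg) (t : C.X →+ B.X), (∀ x ∈ C.gr 0, t x = 0) →
    ∃! h : A.X →+ B.X, h A.one = B.one ∧ (∀ a b, h (A.mul a b) = B.mul (h a) (h b)) ∧
      ∀ c, h (gen c) = t c

/-- The differential of `Ω C` is the cobar differential:
`d (s⁻¹ c) = - s⁻¹ (d c) + Σ (-1)^{|c_i|} s⁻¹ c_i ⬝ s⁻¹ c_j`, the sum being over the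
reduced coproduct `Δ̄ c = Δ c - c ⊗ η - η ⊗ c` of `c`. -/
def CobarDiffSpec (C : GCx) {TC : GCx} (tt : TensorCx C C TC) (comul : C.X →+ TC.X)
    (eta : C.X) (Om : FreeAlgOver C) : Prop :=
  ∀ c, Om.A.d (Om.gen c) =
    - Om.gen (C.d c) +
      (tt.lift (bicomp Om.A.mul (Om.gen.comp C.eps) Om.gen))
        (comul c - tt.tmul c eta - tt.tmul eta c)

/-- Milgram's natural map `q : Ω (C ⊗ C') → Ω C ⊗ Ω C'`, characterized on the
generators by `q (s⁻¹(x ⊗ 1)) = s⁻¹ x ⊗ 1`, `q (s⁻¹(1 ⊗ y)) = 1 ⊗ s⁻¹ y`, and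
`q (s⁻¹ (x ⊗ y)) = 0` for `x, y` of positive degree. -/
def MilgramSpec {CA CB T : GCx} (tt : TensorCx CA CB T)
    (cuA : CA.X →+ ℤ) (cuB : CB.X →+ ℤ)
    (OmA : FreeAlgOver CA) (OmB : FreeAlgOver CB) (OmT : FreeAlgOver T)
    {TOm : GAlg} (ttOm : TensorAlgStr OmA.A OmB.A TOm) (q : AlgMapData OmT.A TOm) : Prop :=
  ∀ a b, q.f (OmT.gen (tt.tmul a b)) =
    cuB b • ttOm.tmul (OmA.gen a) OmB.A.one + cuA a • ttOm.tmul OmA.A.one (OmB.gen b)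

/-- The Gugenheim–Munkholm map `Ω̃f : Ω Y → Ω T` associated to Eilenberg-Zilber data
with projection `awm`, homotopy `phi` and coproduct `cm` on `Y`; characterized on
generators by the recursive formula collecting the family `F_k`:
`Ω̃f (s⁻¹ z) = s⁻¹ (f z) - μ ((Ω̃f ∘ s⁻¹) ⊗ (Ω̃f ∘ s⁻¹)) (Δ (φ z))` (Koszul signs via `eps`). -/
def GMAlgSpec {Y T : GCx} (awm : Y.X →+ T.X) (phi : Y.X →+ Y.X)
    {TY : GCx} (ttY : TensorCx Y Y TY) (cm : Y.X →+ TY.X)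
    (OmY : FreeAlgOver Y) (OmT : FreeAlgOver T) (F : AlgMapData OmY.A OmT.A) : Prop :=
  ∀ z, F.f (OmY.gen z) = OmT.gen (awm z) -
    (ttY.lift (bicomp OmT.A.mul ((F.f.comp OmY.gen).comp Y.eps) (F.f.comp OmY.gen)))
      (cm (phi z))

/-- The Gugenheim–Munkholm homotopy `Ω̃φ : Ω Y → Ω Y` (collected form of the family
`Φ_k`), characterized on generators by
`Ω̃φ (s⁻¹ z) = s⁻¹ (φ z) + μ((Ω̃φ s⁻¹) ⊗ s⁻¹)(Δ φ z) + μ((Ω∇ Ω̃f s⁻¹) ⊗ (Ω̃φ s⁻¹))(Δ φ z)`. -/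
def GMHtpySpec {Y T : GCx} (phi : Y.X →+ Y.X)
    {TY : GCx} (ttY : TensorCx Y Y TY) (cm : Y.X →+ TY.X)
    (OmY : FreeAlgOver Y) (OmT : FreeAlgOver T)
    (Otf : AlgMapData OmY.A OmT.A) (Onab : AlgMapData OmT.A OmY.A)
    (H : OmY.A.X →+ OmY.A.X) : Prop :=
  ∀ z, H (OmY.gen z) = OmY.gen (phi z)
    + (ttY.lift (bicomp OmY.A.mul (H.comp OmY.gen) OmY.gen)) (cm (phi z))
    + (ttY.lift (bicomp OmY.A.mul
        ((((Onab.f.comp Otf.f).comp OmY.gen)).comp Y.eps) (H.comp OmY.gen))) (cm (phi z))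

/-- A system of tensor powers `P k = W^{⊗ k}` of a graded chain complex `W`. -/
structure PowSys (W : GCx) : Type 1 where
  P : ℕ → GCx
  emb : W.X →+ (P 1).X
  embInv : (P 1).X →+ W.X
  emb_inv : ∀ x, embInv (emb x) = x
  inv_emb : ∀ y, emb (embInv y) = y
  emb_gr : ∀ n, ∀ x ∈ W.gr n, emb x ∈ (P 1).gr n
  tk : ∀ i j, TensorCx (P i) (P j) (P (i + j))

/-- Transport along an equality of tensor-power indices. -/
def pcast {W : GCx} (PS : PowSys W) {a b : ℕ} (h : a = b) : (PS.P a).X →+ (PS.P b).X := by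
  subst h; exact AddMonoidHom.id _

/-- Strict associativity of a system of tensor powers. -/
def PowAssoc {W : GCx} (PS : PowSys W) : Prop :=
  ∀ i j k u v w, (PS.tk (i + j) k).tmul ((PS.tk i j).tmul u v) w
    = pcast PS (by omega) ((PS.tk i (j + k)).tmul u ((PS.tk j k).tmul v w))

/-- `mulgen Om PS g k : W^{⊗k} → Ω` is the map `(s⁻¹)^{⊗ k}` followed by the
`k`-fold product, i.e. `x₁ ⊗ ⋯ ⊗ x_k ↦ ± g(x₁) ⋯ g(x_k)` (with Koszul signs). -/
def mulgen {C : GCx} (Om : FreeAlgOver C) {W : GCx} (PS : PowSys W)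
    (g : W.X →+ Om.A.X) : ∀ k, (PS.P k).X →+ Om.A.X := fun k => match k with
  | 0 => 0
  | 1 => g.comp PS.embInv
  | (k + 2) => (PS.tk (k + 1) 1).lift (bicomp Om.A.mul
      ((mulgen Om PS g (k + 1)).comp (PS.P (k + 1)).eps) (g.comp PS.embInv))

/-- The Gugenheim–Munkholm family `F_k : Y → T^{⊗ k}`:  `F₁ = f` and
`F_k = - Σ_{i+j=k} (F_i ⊗ F_j) ∘ Δ_Y ∘ φ`. -/
def GMFamilySpec {Y TY : GCx} (ttY : TensorCx Y Y TY) (cm : Y.X →+ TY.X)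
    (phi : Y.X →+ Y.X) {T : GCx} (PS : PowSys T) (f1 : Y.X →+ T.X)
    (F : ∀ k, Y.X →+ (PS.P k).X) : Prop :=
  (F 0 = 0) ∧ (∀ z, F 1 z = PS.emb (f1 z)) ∧
  ∀ k, 2 ≤ k → ∀ z, F k z =
    - ∑ p ∈ (Finset.HasAntidiagonal.antidiagonal k).attach,
        pcast PS (Finset.HasAntidiagonal.mem_antidiagonal.mp p.2)
          ((ttY.lift (bicomp (PS.tk p.1.1 p.1.2).tmul
              ((F p.1.1).comp (Y.sgn fun n => (-1) ^ ((p.1.2 - 1) * n))) (F p.1.2)))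
            (cm (phi z)))

/-- The data of compatible maps `g^{⊗ k}` between two systems of tensor powers. -/
structure PowMapData {A B : GCx} (PA : PowSys A) (PB : PowSys B) (g : A.X →+ B.X) : Type where
  m : ∀ k, (PA.P k).X →+ (PB.P k).X
  m_one : ∀ x, m 1 (PA.emb x) = PB.emb (g x)
  m_tk : ∀ i j u v, m (i + j) ((PA.tk i j).tmul u v) = (PB.tk i j).tmul (m i u) (m j v)

/-- The Gugenheim–Munkholm family `Φ_k : Y → Y^{⊗ k}`:  `Φ₁ = φ` and
`Φ_k = (Φ_{k-1} ⊗ 1 + Σ_{i+j=k} ∇^{⊗i} F_i ⊗ Φ_j) ∘ Δ_Y ∘ φ`. -/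
def GMPhiFamilySpec {Y TY : GCx} (ttY : TensorCx Y Y TY) (cm : Y.X →+ TY.X)
    (phi : Y.X →+ Y.X) {T : GCx} (PST : PowSys T) (PSY : PowSys Y)
    (F : ∀ k, Y.X →+ (PST.P k).X) {nab : T.X →+ Y.X} (nabP : PowMapData PST PSY nab)
    (Ph : ∀ k, Y.X →+ (PSY.P k).X) : Prop :=
  (Ph 0 = 0) ∧ (∀ z, Ph 1 z = PSY.emb (phi z)) ∧
  ∀ k, ∀ hk : 2 ≤ k, ∀ z, Ph k z =
    pcast PSY (by omega : k - 1 + 1 = k)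
      ((ttY.lift (bicomp (PSY.tk (k - 1) 1).tmul (Ph (k - 1)) PSY.emb)) (cm (phi z)))
    + ∑ p ∈ (Finset.HasAntidiagonal.antidiagonal k).attach,
        pcast PSY (Finset.HasAntidiagonal.mem_antidiagonal.mp p.2)
          ((ttY.lift (bicomp (PSY.tk p.1.1 p.1.2).tmul
              (((nabP.m p.1.1).comp (F p.1.1)).comp (Y.sgn fun n => (-1) ^ (p.1.2 * n)))
              (Ph p.1.2))) (cm (phi z)))
/-! ### More on lifts, the tensor-coalgebra coproduct, twisting cochains -/

lemma TensorCx.lift_tmul {A B T : GCx} (tt : TensorCx A B T) {Z : Type} [AddCommGroup Z]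
    (g : A.X →+ B.X →+ Z) (a : A.X) (b : B.X) : tt.lift g (tt.tmul a b) = g a b :=
  (tt.up Z g).exists.choose_spec a b

lemma TensorCx.lift_unique {A B T : GCx} (tt : TensorCx A B T) {Z : Type} [AddCommGroup Z]
    (g : A.X →+ B.X →+ Z) (h : T.X →+ Z) (hh : ∀ a b, h (tt.tmul a b) = g a b) :
    h = tt.lift g :=
  (tt.up Z g).unique hh fun a b => tt.lift_tmul g a b

lemma TensorCx.lift_add {A B T : GCx} (tt : TensorCx A B T) {Z : Type} [AddCommGroup Z]
    (g₁ g₂ : A.X →+ B.X →+ Z) : tt.lift (g₁ + g₂) = tt.lift g₁ + tt.lift g₂ := by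
  symm
  apply tt.lift_unique
  intro a b
  simp [TensorCx.lift_tmul]

section Rearrange

variable {C C' P TC TC' TT : GCx} (ttC : TensorCx C C TC) (ttC' : TensorCx C' C' TC')
  (ttP : TensorCx C C' P) (ttTT : TensorCx P P TT)

/-- `(x₂, y₁) ↦ ((x₁, y₂) ↦ (-1)^{|x₂||y₁|} (x₁ ⊗ y₁) ⊗ (x₂ ⊗ y₂))`. -/
def rearrM : C.X →+ C'.X →+ (C.X →+ C'.X →+ TT.X) :=
  twistBi C C' (fun p q => (-1) ^ (p * q))
    (mkBi (fun x₂ y₁ => bicomp ttTT.tmul (ttP.tmul.flip y₁) (ttP.tmul x₂))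
      (fun a a' b => by ext x₁ y₂; simp [bicomp, mkBi, map_add])
      (fun a b b' => by ext x₁ y₂; simp [bicomp, mkBi, map_add]))

/-- The inner bilinear family of `rearrange`. -/
def rearrInner (x₁ x₂ : C.X) : C'.X →+ C'.X →+ TT.X :=
  mkBi (fun y₁ y₂ => rearrM ttP ttTT x₂ y₁ x₁ y₂)
    (fun a a' b => by simp [map_add])
    (fun a b b' => by simp [map_add])

lemma rearrInner_addl (x₁ x₁' x₂ : C.X) :
    rearrInner ttP ttTT (x₁ + x₁') x₂ = rearrInner ttP ttTT x₁ x₂ + rearrInner ttP ttTT x₁' x₂ := by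
  ext y₁ y₂; simp [rearrInner, mkBi, map_add]

lemma rearrInner_addr (x₁ x₂ x₂' : C.X) :
    rearrInner ttP ttTT x₁ (x₂ + x₂') = rearrInner ttP ttTT x₁ x₂ + rearrInner ttP ttTT x₁ x₂' := by
  ext y₁ y₂; simp [rearrInner, mkBi, map_add]

/-- The rearrangement `(1 ⊗ sw ⊗ 1)` with Koszul signs:
`(x₁ ⊗ x₂) ⊗ (y₁ ⊗ y₂) ↦ (-1)^{|x₂||y₁|} (x₁ ⊗ y₁) ⊗ (x₂ ⊗ y₂)`. -/
def rearrange : TC.X →+ TC'.X →+ TT.X :=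
  ttC.lift (mkBi (fun x₁ x₂ => ttC'.lift (rearrInner ttP ttTT x₁ x₂))
    (fun a a' b => by try simp only []
                      rw [rearrInner_addl, TensorCx.lift_add])
    (fun a b b' => by try simp only []
                      rw [rearrInner_addr, TensorCx.lift_add]))

end Rearrange

/-- The coproduct of the tensor product `C ⊗ C'` of two chain coalgebras is
`(1 ⊗ sw ⊗ 1)(Δ ⊗ Δ')`. -/
def TensorComulSpec {C C' P TC TC' TT : GCx} (ttC : TensorCx C C TC)
    (ttC' : TensorCx C' C' TC') (ttP : TensorCx C C' P) (ttTT : TensorCx P P TT)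
    (comulC : C.X →+ TC.X) (comulC' : C'.X →+ TC'.X) (comulP : P.X →+ TT.X) : Prop :=
  ∀ x y, comulP (ttP.tmul x y) = rearrange ttC ttC' ttP ttTT (comulC x) (comulC' y)

/-- A twisting cochain from a chain coalgebra to a chain algebra: a degree `-1` map
`t` with `dt + td = μ (t ⊗ t) Δ` (Koszul signs via `eps`). -/
def IsTwistingCochain (C : GCx) {TC : GCx} (tt : TensorCx C C TC) (comul : C.X →+ TC.X)
    (A : GAlg) (t : C.X →+ A.X) : Prop :=
  (∀ n, ∀ x ∈ C.gr (n + 1), t x ∈ A.gr n) ∧ (∀ x ∈ C.gr 0, t x = 0) ∧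
  ∀ c, A.d (t c) + t (C.d c) = (tt.lift (bicomp A.mul (t.comp C.eps) t)) (comul c)

/-!
Write `τ = t ⊗ η'ε' + ηε ⊗ t'`. On `x ⊗ y` the differential side `dτ + τd` is
`ε'(y) (dt + td)(x) ⊗ 1 + ε(x) 1 ⊗ (dt' + t'd)(y)`, because the counits are chain maps
(a consequence of the counit laws). On the other side, `μ(τ ⊗ τ)` composed with the shuffle
`1 ⊗ sw ⊗ 1` expands into four terms: the two "diagonal" ones give
`ε'(y) μ(t ⊗ t)Δx ⊗ 1 + ε(x) 1 ⊗ μ(t' ⊗ t')Δy`, while the two mixed ones are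
`± t(x) ⊗ t'(y)` with opposite Koszul signs and cancel after applying the counit laws.
The twisting equations for `t` and `t'` then match the two sides.
-/

namespace GCx

variable (Z : GCx)

theorem coe_dec (x : Z.X) : DirectSum.coeAddMonoidHom Z.gr (Z.dec x) = x :=
  (AddEquiv.ofBijective _ Z.internal).apply_symm_apply x

theorem induction_on {motive : Z.X → Prop} (x : Z.X) (zero : motive 0)
    (add : ∀ x y, motive x → motive y → motive (x + y))
    (mem : ∀ n, ∀ x ∈ Z.gr n, motive x) : motive x := by
  have h : ∀ y : ⨁ n, Z.gr n, motive (DirectSum.coeAddMonoidHom Z.gr y) := fun y =>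
    DirectSum.induction_on y (by simpa using zero)
      (fun n a => by simpa using mem n a a.2)
      (fun a b ha hb => by simpa using add _ _ ha hb)
  simpa [coe_dec] using h (Z.dec x)

variable {Z}

theorem dec_of_mem {m : ℕ} {x : Z.X} (hx : x ∈ Z.gr m) :
    Z.dec x = DirectSum.of (fun n => Z.gr n) m ⟨x, hx⟩ :=
  Z.internal.injective <| by simp [coe_dec]

theorem sgn_of_mem (c : ℕ → ℤ) {m : ℕ} {x : Z.X} (hx : x ∈ Z.gr m) :
    Z.sgn c x = c m • x := by
  rw [sgn, AddMonoidHom.comp_apply, dec_of_mem hx, DirectSum.toAddMonoid_of]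
  rfl

theorem eps_of_mem {m : ℕ} {x : Z.X} (hx : x ∈ Z.gr m) : Z.eps x = (-1 : ℤ) ^ m • x :=
  sgn_of_mem _ hx

variable (Z) in
def proj (m : ℕ) : Z.X →+ Z.X := Z.sgn fun n => if n = m then 1 else 0

theorem proj_of_mem {m : ℕ} {x : Z.X} (hx : x ∈ Z.gr m) : Z.proj m x = x := by
  simp [proj, sgn_of_mem _ hx]

theorem proj_of_mem_of_ne {k m : ℕ} {x : Z.X} (hx : x ∈ Z.gr k) (h : k ≠ m) :
    Z.proj m x = 0 := by
  simp [proj, sgn_of_mem _ hx, h]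

end GCx

theorem GAlg.d_one (A : GAlg) : A.d A.one = 0 := A.d_gr0 _ A.one_gr

theorem twistBi_of_mem (A B : GCx) {Z : Type} [AddCommGroup Z] (s : ℕ → ℕ → ℤ)
    (f : A.X →+ B.X →+ Z) {p q : ℕ} {a : A.X} {b : B.X} (ha : a ∈ A.gr p) (hb : b ∈ B.gr q) :
    twistBi A B s f a b = s p q • f a b := by
  rw [twistBi, AddMonoidHom.comp_apply, A.dec_of_mem ha, DirectSum.toAddMonoid_of]
  change f a (B.sgn (s p) b) = _
  rw [B.sgn_of_mem _ hb, map_zsmul]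

namespace TensorCx

variable {A B T : GCx} (tt : TensorCx A B T)

/-- The quotient by the subgroup generated by the `a ⊗ b` is killed by uniqueness in the
universal property, so these elements generate. -/
theorem induction_on {motive : T.X → Prop} (z : T.X) (zero : motive 0)
    (add : ∀ z w, motive z → motive w → motive (z + w))
    (tmul : ∀ p q a b, a ∈ A.gr p → b ∈ B.gr q → motive (tt.tmul a b)) : motive z := by
  let gens : Set T.X := {z | ∃ p q a b, a ∈ A.gr p ∧ b ∈ B.gr q ∧ tt.tmul a b = z}
  let S := AddSubgroup.closure gens
  have hS : ∀ a b, tt.tmul a b ∈ S := fun a b =>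
    A.induction_on (motive := fun a => ∀ b, tt.tmul a b ∈ S) a (by simp [zero_mem])
      (fun a a' ha ha' b => by simpa using add_mem (ha b) (ha' b))
      (fun p a ha b => B.induction_on (motive := fun b => tt.tmul a b ∈ S) b (by simp [zero_mem])
        (fun b b' hb hb' => by simpa using add_mem hb hb')
        (fun q b hb => AddSubgroup.subset_closure (k := gens) ⟨p, q, a, b, ha, hb, rfl⟩)) b
  have hmk : QuotientAddGroup.mk' S = 0 :=
    (tt.lift_unique 0 _ fun a b => by simpa using hS a b).trans
      (tt.lift_unique 0 0 fun _ _ => rfl).symm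
  have hz : z ∈ S := by
    simpa using DFunLike.congr_fun hmk z
  induction hz using AddSubgroup.closure_induction'' with
  | mem z hz =>
    obtain ⟨p, q, a, b, ha, hb, rfl⟩ := hz
    exact tmul p q a b ha hb
  | neg_mem z hz =>
    obtain ⟨p, q, a, b, ha, hb, rfl⟩ := hz
    simpa using tmul p q (-a) b (neg_mem ha) hb
  | zero => exact zero
  | add z w _ _ hz hw => exact add z w hz hw

theorem map_mem_of_tmul_mem {W : Type} [AddCommGroup W] (f : T.X →+ W) (S : AddSubgroup W)
    (n : ℕ) (h : ∀ p q a b, a ∈ A.gr p → b ∈ B.gr q → p + q = n → f (tt.tmul a b) ∈ S)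
    {z : T.X} (hz : z ∈ T.gr n) : f z ∈ S := by
  have key : ∀ z, f (T.proj n z) ∈ S := fun z => by
    induction z using tt.induction_on with
    | zero => simp [zero_mem]
    | add z w hz hw => simpa using add_mem hz hw
    | tmul p q a b ha hb =>
      have hab := tt.tmul_gr p q a b ha hb
      by_cases hpq : p + q = n
      · rw [T.proj_of_mem (hpq ▸ hab)]
        exact h p q a b ha hb hpq
      · simp [T.proj_of_mem_of_ne hab hpq, zero_mem]
  simpa [T.proj_of_mem hz] using key z

end TensorCx

theorem rearrange_tmul {C C' P TC TC' TT : GCx} (ttC : TensorCx C C TC)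
    (ttC' : TensorCx C' C' TC') (ttP : TensorCx C C' P) (ttTT : TensorCx P P TT)
    {p₂ q₁ : ℕ} (x₁ : C.X) {x₂ : C.X} {y₁ : C'.X} (y₂ : C'.X)
    (hx₂ : x₂ ∈ C.gr p₂) (hy₁ : y₁ ∈ C'.gr q₁) :
    rearrange ttC ttC' ttP ttTT (ttC.tmul x₁ x₂) (ttC'.tmul y₁ y₂)
      = (-1 : ℤ) ^ (p₂ * q₁) • ttTT.tmul (ttP.tmul x₁ y₁) (ttP.tmul x₂ y₂) := by
  rw [rearrange, TensorCx.lift_tmul, mkBi_apply, TensorCx.lift_tmul]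
  change rearrM ttP ttTT x₂ y₁ x₁ y₂ = _
  rw [rearrM, twistBi_of_mem C C' _ _ hx₂ hy₁]
  rfl

namespace TensorAlgStr

variable {A B T : GAlg} (tt : TensorAlgStr A B T)

theorem tmul_one_mul_tmul_one (a a' : A.X) :
    T.mul (tt.tmul a B.one) (tt.tmul a' B.one) = tt.tmul (A.mul a a') B.one := by
  induction a' using A.induction_on with
  | zero => simp
  | add a' a'' h h' => simp [h, h']
  | mem p a' ha' => simp [tt.mul_tmul 0 B.one B.one_gr p a' ha', B.one_mul]

theorem tmul_one_mul_one_tmul (a : A.X) (b : B.X) :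
    T.mul (tt.tmul a B.one) (tt.tmul A.one b) = tt.tmul a b := by
  simp [tt.mul_tmul 0 B.one B.one_gr 0 A.one A.one_gr, A.mul_one, B.one_mul]

theorem one_tmul_mul_tmul_one {q p : ℕ} {b : B.X} {a : A.X} (hb : b ∈ B.gr q)
    (ha : a ∈ A.gr p) :
    T.mul (tt.tmul A.one b) (tt.tmul a B.one) = (-1 : ℤ) ^ (q * p) • tt.tmul a b := by
  simp [tt.mul_tmul q b hb p a ha, A.one_mul, B.mul_one]

theorem one_tmul_mul_one_tmul (b b' : B.X) :
    T.mul (tt.tmul A.one b) (tt.tmul A.one b') = tt.tmul A.one (B.mul b b') := by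
  induction b using B.induction_on with
  | zero => simp
  | add b b'' h h' => simp [h, h']
  | mem q b hb => simp [tt.mul_tmul q b hb 0 A.one A.one_gr, A.one_mul]

theorem d_tmul_one (a : A.X) : T.d (tt.tmul a B.one) = tt.tmul (A.d a) B.one := by
  induction a using A.induction_on with
  | zero => simp
  | add a a' h h' => simp [h, h']
  | mem p a ha => simp [tt.d_tmul p a ha, B.d_one]

theorem d_one_tmul (b : B.X) : T.d (tt.tmul A.one b) = tt.tmul A.one (B.d b) := by
  simp [tt.d_tmul 0 A.one A.one_gr, A.d_one]

end TensorAlgStr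

section Counit

variable {A B T : GCx} (tt : TensorCx A B T)

def counitLeft (cu : A.X →+ ℤ) : T.X →+ B.X :=
  tt.lift (mkBi (fun a b => cu a • b) (fun a a' b => by simp [add_smul]) (fun a b b' => by simp))

def counitRight (cu : B.X →+ ℤ) : T.X →+ A.X :=
  tt.lift (mkBi (fun a b => cu b • a) (fun a a' b => by simp) (fun a b b' => by simp [add_smul]))

@[simp] theorem counitLeft_tmul (cu : A.X →+ ℤ) (a : A.X) (b : B.X) :
    counitLeft tt cu (tt.tmul a b) = cu a • b :=
  tt.lift_tmul _ a b

@[simp] theorem counitRight_tmul (cu : B.X →+ ℤ) (a : A.X) (b : B.X) :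
    counitRight tt cu (tt.tmul a b) = cu b • a :=
  tt.lift_tmul _ a b

end Counit

/-- Applying `ε ∘ (ε ⊗ 1)` to `d Δ x = Δ (d x)` and expanding by the Leibniz rule gives
`ε(dx) = 2 ε(dx)`. -/
theorem counit_d_eq_zero {C TC : GCx} (tt : TensorCx C C TC) (comul : C.X →+ TC.X)
    (hcomul : ∀ x, comul (C.d x) = TC.d (comul x)) (cu : C.X →+ ℤ)
    (hcu : ∀ n, ∀ x ∈ C.gr (n + 1), cu x = 0)
    (hl : ∀ c, counitLeft tt cu (comul c) = c) (hr : ∀ c, counitRight tt cu (comul c) = c)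
    (x : C.X) : cu (C.d x) = 0 := by
  have key : ∀ z, cu (counitLeft tt cu (TC.d z))
      = cu (C.d (counitRight tt cu z)) + cu (C.d (counitLeft tt cu z)) := fun z => by
    induction z using tt.induction_on with
    | zero => simp
    | add z w hz hw => simp only [map_add, hz, hw]; abel
    | tmul p q a b ha hb =>
      rcases p with _ | p
      · simp [tt.d_tmul 0 a ha, mul_comm]
      · simp [tt.d_tmul _ a ha, hcu p a ha, mul_comm]
  have := key (comul x)
  rw [← hcomul, hl, hr, hl] at this
  omega

def cup {C D T : GCx} (tt : TensorCx C D T) (A : GAlg) (f : C.X →+ A.X) (g : D.X →+ A.X) :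
    T.X →+ A.X :=
  tt.lift (bicomp A.mul (f.comp C.eps) g)

theorem cup_tmul {C D T : GCx} (tt : TensorCx C D T) (A : GAlg) (f : C.X →+ A.X)
    (g : D.X →+ A.X) {p : ℕ} {x : C.X} (hx : x ∈ C.gr p) (y : D.X) :
    cup tt A f g (tt.tmul x y) = (-1 : ℤ) ^ p • A.mul (f x) (g y) := by
  rw [cup, TensorCx.lift_tmul]
  change A.mul (f (C.eps x)) (g y) = _
  simp [C.eps_of_mem hx]

section TensorTwisting

variable {C C' P : GCx} (ttP : TensorCx C C' P) {A A' AA' : GAlg} (ttA : TensorAlgStr A A' AA')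
  (cu : C.X →+ ℤ) (cu' : C'.X →+ ℤ) (t : C.X →+ A.X) (t' : C'.X →+ A'.X)

def tensorTwisting : P.X →+ AA'.X :=
  ttP.lift (mkBi (fun x y => cu' y • ttA.tmul (t x) A'.one + cu x • ttA.tmul A.one (t' y))
    (fun a a' b => by simp [map_add, smul_add, add_smul]; abel)
    (fun a b b' => by simp [map_add, smul_add, add_smul]; abel))

theorem tensorTwisting_tmul (x : C.X) (y : C'.X) :
    tensorTwisting ttP ttA cu cu' t t' (ttP.tmul x y)
      = cu' y • ttA.tmul (t x) A'.one + cu x • ttA.tmul A.one (t' y) :=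
  ttP.lift_tmul _ x y

variable {cu cu' t t'}

theorem tensorTwisting_mem (hcu : ∀ n, ∀ x ∈ C.gr (n + 1), cu x = 0)
    (hcu' : ∀ n, ∀ y ∈ C'.gr (n + 1), cu' y = 0)
    (ht : ∀ n, ∀ x ∈ C.gr (n + 1), t x ∈ A.gr n) (ht' : ∀ n, ∀ y ∈ C'.gr (n + 1), t' y ∈ A'.gr n)
    {n : ℕ} {z : P.X} (hz : z ∈ P.gr (n + 1)) :
    tensorTwisting ttP ttA cu cu' t t' z ∈ AA'.gr n := by
  refine ttP.map_mem_of_tmul_mem _ _ (n + 1) (fun p q x y hx hy hpq => ?_) hz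
  rw [tensorTwisting_tmul]
  rcases q with _ | q
  · obtain rfl : p = n + 1 := hpq
    rw [hcu n x hx, zero_smul, add_zero]
    exact zsmul_mem (ttA.tmul_gr n 0 _ _ (ht n x hx) A'.one_gr) _
  · rw [hcu' q y hy, zero_smul, zero_add]
    rcases p with _ | p
    · obtain rfl : q = n := by omega
      exact zsmul_mem (by simpa using ttA.tmul_gr 0 q _ _ A.one_gr (ht' q y hy)) _
    · rw [hcu p x hx, zero_smul]
      exact zero_mem _

theorem tensorTwisting_eq_zero (ht0 : ∀ x ∈ C.gr 0, t x = 0) (ht0' : ∀ y ∈ C'.gr 0, t' y = 0)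
    {z : P.X} (hz : z ∈ P.gr 0) : tensorTwisting ttP ttA cu cu' t t' z = 0 := by
  refine ttP.map_mem_of_tmul_mem _ ⊥ 0 (fun p q x y hx hy hpq => ?_) hz
  obtain ⟨rfl, rfl⟩ : p = 0 ∧ q = 0 := by omega
  simp [tensorTwisting_tmul, ht0 x hx, ht0' y hy]

theorem d_tensorTwisting_add (hcu : ∀ n, ∀ x ∈ C.gr (n + 1), cu x = 0)
    (hdcu : ∀ x, cu (C.d x) = 0) (hdcu' : ∀ y, cu' (C'.d y) = 0)
    {p : ℕ} {x : C.X} (hx : x ∈ C.gr p) (y : C'.X) :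
    AA'.d (tensorTwisting ttP ttA cu cu' t t' (ttP.tmul x y))
        + tensorTwisting ttP ttA cu cu' t t' (P.d (ttP.tmul x y))
      = cu' y • ttA.tmul (A.d (t x) + t (C.d x)) A'.one
        + cu x • ttA.tmul A.one (A'.d (t' y) + t' (C'.d y)) := by
  have hsgn : (-1 : ℤ) ^ p * cu x = cu x := by
    rcases p with _ | p
    · simp
    · simp [hcu p x hx]
  simp only [ttP.d_tmul p x hx, map_add, map_zsmul, tensorTwisting_tmul, ttA.d_tmul_one,
    ttA.d_one_tmul, hdcu, hdcu', zero_smul, zero_add, add_zero, AddMonoidHom.add_apply, smul_add,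
    smul_smul, hsgn]
  abel

variable {TC TC' TT : GCx} (ttC : TensorCx C C TC) (ttC' : TensorCx C' C' TC')
  (ttTT : TensorCx P P TT)

theorem cup_tensorTwisting_rearrange_tmul (hcu : ∀ n, ∀ x ∈ C.gr (n + 1), cu x = 0)
    (hcu' : ∀ n, ∀ y ∈ C'.gr (n + 1), cu' y = 0)
    (ht : ∀ n, ∀ x ∈ C.gr (n + 1), t x ∈ A.gr n) (ht0 : ∀ x ∈ C.gr 0, t x = 0)
    (ht' : ∀ n, ∀ y ∈ C'.gr (n + 1), t' y ∈ A'.gr n) (ht0' : ∀ y ∈ C'.gr 0, t' y = 0)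
    {p₁ p₂ q₁ : ℕ} {x₁ x₂ : C.X} {y₁ : C'.X} (hx₁ : x₁ ∈ C.gr p₁) (hx₂ : x₂ ∈ C.gr p₂)
    (hy₁ : y₁ ∈ C'.gr q₁) (y₂ : C'.X) :
    cup ttTT AA' (tensorTwisting ttP ttA cu cu' t t') (tensorTwisting ttP ttA cu cu' t t')
        (rearrange ttC ttC' ttP ttTT (ttC.tmul x₁ x₂) (ttC'.tmul y₁ y₂))
      = (cu' y₁ * cu' y₂) • ttA.tmul (cup ttC A t t (ttC.tmul x₁ x₂)) A'.one
        + (cu x₁ * cu x₂) • ttA.tmul A.one (cup ttC' A' t' t' (ttC'.tmul y₁ y₂))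
        + (cu x₂ * cu' y₁) • ttA.tmul (t (C.eps x₁)) (t' y₂)
        - (cu x₁ * cu' y₂) • ttA.tmul (t (C.eps x₂)) (t' y₁) := by
  rw [rearrange_tmul ttC ttC' ttP ttTT x₁ y₂ hx₂ hy₁, map_zsmul,
    cup_tmul _ _ _ _ (ttP.tmul_gr _ _ _ _ hx₁ hy₁), tensorTwisting_tmul, tensorTwisting_tmul,
    cup_tmul _ _ _ _ hx₁, cup_tmul _ _ _ _ hy₁, C.eps_of_mem hx₁, C.eps_of_mem hx₂]
  simp only [map_add, map_zsmul, AddMonoidHom.add_apply, AddMonoidHom.smul_apply,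
    ttA.tmul_one_mul_tmul_one, ttA.tmul_one_mul_one_tmul, ttA.one_tmul_mul_one_tmul, smul_add,
    smul_smul]
  rcases q₁ with _ | k
  · simp only [ht0' y₁ hy₁, map_zero, AddMonoidHom.zero_apply, smul_zero]
    module
  rcases p₁ with _ | m
  swap
  · simp [hcu' k y₁ hy₁, hcu m x₁ hx₁]
  rcases p₂ with _ | l
  · simp only [hcu' k y₁ hy₁, ht0 x₂ hx₂, map_zero, AddMonoidHom.zero_apply, smul_zero]
    module
  have hsign : (-1 : ℤ) ^ ((l + 1) * (k + 1)) * (-1) ^ (k + 1) * (-1) ^ (k * l)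
      = -(-1) ^ (l + 1) := by
    have h : (l + 1) * (k + 1) + (k + 1) + k * l = 2 * (k * l + k + 1) + l := by ring
    rw [← pow_add, ← pow_add, h, pow_add, pow_mul]
    ring
  rw [ttA.one_tmul_mul_tmul_one (ht' k y₁ hy₁) (ht l x₂ hx₂)]
  simp only [hcu' k y₁ hy₁, hcu l x₂ hx₂, zero_add, zero_mul, mul_zero, zero_smul, add_zero,
    zero_sub, pow_zero]
  match_scalars
  linear_combination (cu' y₂ * cu x₁) * hsign

theorem cup_tensorTwisting_rearrange (hcu : ∀ n, ∀ x ∈ C.gr (n + 1), cu x = 0)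
    (hcu' : ∀ n, ∀ y ∈ C'.gr (n + 1), cu' y = 0)
    (ht : ∀ n, ∀ x ∈ C.gr (n + 1), t x ∈ A.gr n) (ht0 : ∀ x ∈ C.gr 0, t x = 0)
    (ht' : ∀ n, ∀ y ∈ C'.gr (n + 1), t' y ∈ A'.gr n) (ht0' : ∀ y ∈ C'.gr 0, t' y = 0)
    (u : TC.X) (v : TC'.X) :
    cup ttTT AA' (tensorTwisting ttP ttA cu cu' t t') (tensorTwisting ttP ttA cu cu' t t')
        (rearrange ttC ttC' ttP ttTT u v)
      = cu' (counitLeft ttC' cu' v) • ttA.tmul (cup ttC A t t u) A'.one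
        + cu (counitLeft ttC cu u) • ttA.tmul A.one (cup ttC' A' t' t' v)
        + ttA.tmul (t (C.eps (counitRight ttC cu u))) (t' (counitLeft ttC' cu' v))
        - ttA.tmul (t (C.eps (counitLeft ttC cu u))) (t' (counitRight ttC' cu' v)) := by
  induction u using ttC.induction_on with
  | zero => simp
  | add u u' hu hu' =>
    simp only [map_add, AddMonoidHom.add_apply, add_smul, smul_add, hu, hu']
    abel
  | tmul p₁ p₂ x₁ x₂ hx₁ hx₂ =>
    induction v using ttC'.induction_on with
    | zero => simp
    | add v v' hv hv' =>
      simp only [map_add, add_smul, smul_add, hv, hv']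
      abel
    | tmul q₁ q₂ y₁ y₂ hy₁ _ =>
      rw [cup_tensorTwisting_rearrange_tmul ttP ttA ttC ttC' ttTT hcu hcu' ht ht0 ht' ht0'
        hx₁ hx₂ hy₁]
      simp [smul_smul]

end TensorTwisting
theorem statement15
    (C C' : GCx) (TC TC' : GCx) (ttC : TensorCx C C TC) (ttC' : TensorCx C' C' TC')
    -- the coalgebra structures on `C` and `C'`
    (comulC : C.X →+ TC.X) (hcomulC : IsChainMap C TC comulC)
    (comulC' : C'.X →+ TC'.X) (hcomulC' : IsChainMap C' TC' comulC')
    -- the counits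
    (cu : C.X →+ ℤ) (hcu : ∀ n, ∀ x ∈ C.gr (n + 1), cu x = 0)
    (cu' : C'.X →+ ℤ) (hcu' : ∀ n, ∀ x ∈ C'.gr (n + 1), cu' x = 0)
    (hcounitl : ∀ c, (ttC.lift (mkBi (fun a b => cu a • b)
        (fun a a' b => by simp [add_smul]) (fun a b b' => by simp))) (comulC c) = c)
    (hcounitr : ∀ c, (ttC.lift (mkBi (fun a b => cu b • a)
        (fun a a' b => by simp) (fun a b b' => by simp [add_smul]))) (comulC c) = c)
    (hcounitl' : ∀ c, (ttC'.lift (mkBi (fun a b => cu' a • b)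
        (fun a a' b => by simp [add_smul]) (fun a b b' => by simp))) (comulC' c) = c)
    (hcounitr' : ∀ c, (ttC'.lift (mkBi (fun a b => cu' b • a)
        (fun a a' b => by simp) (fun a b b' => by simp [add_smul]))) (comulC' c) = c)
    -- the chain algebras
    (A A' : GAlg)
    -- the twisting cochains
    (t : C.X →+ A.X) (ht : IsTwistingCochain C ttC comulC A t)
    (t' : C'.X →+ A'.X) (ht' : IsTwistingCochain C' ttC' comulC' A' t')
    -- the tensor product coalgebra `C ⊗ C'`, with its coproduct
    (P : GCx) (ttP : TensorCx C C' P)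
    (TT : GCx) (ttTT : TensorCx P P TT)
    (comulP : P.X →+ TT.X)
    (hcomulP : TensorComulSpec ttC ttC' ttP ttTT comulC comulC' comulP)
    -- the tensor product algebra `A ⊗ A'`
    (AA' : GAlg) (ttA : TensorAlgStr A A' AA') :
    IsTwistingCochain P ttTT comulP AA'
      (ttP.lift (mkBi (fun x y => cu' y • ttA.tmul (t x) A'.one + cu x • ttA.tmul A.one (t' y))
        (fun a a' b => by simp [map_add, smul_add, add_smul]; abel)
        (fun a b b' => by simp [map_add, smul_add, add_smul]; abel))) := by
  have hteq : ∀ c, A.d (t c) + t (C.d c) = cup ttC A t t (comulC c) := ht.2.2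
  have hteq' : ∀ c, A'.d (t' c) + t' (C'.d c) = cup ttC' A' t' t' (comulC' c) := ht'.2.2
  obtain ⟨ht, ht0, -⟩ := ht
  obtain ⟨ht', ht0', -⟩ := ht'
  have hl : ∀ c, counitLeft ttC cu (comulC c) = c := hcounitl
  have hr : ∀ c, counitRight ttC cu (comulC c) = c := hcounitr
  have hl' : ∀ c, counitLeft ttC' cu' (comulC' c) = c := hcounitl'
  have hr' : ∀ c, counitRight ttC' cu' (comulC' c) = c := hcounitr'
  have hdcu := counit_d_eq_zero ttC comulC hcomulC.2 cu hcu hl hr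
  have hdcu' := counit_d_eq_zero ttC' comulC' hcomulC'.2 cu' hcu' hl' hr'
  change IsTwistingCochain P ttTT comulP AA' (tensorTwisting ttP ttA cu cu' t t')
  refine ⟨fun n z hz => tensorTwisting_mem ttP ttA hcu hcu' ht ht' hz,
    fun z hz => tensorTwisting_eq_zero ttP ttA ht0 ht0' hz, fun z => ?_⟩
  change _ = cup ttTT AA' _ _ (comulP z)
  induction z using ttP.induction_on with
  | zero => simp
  | add z w hz hw => simp only [map_add, ← hz, ← hw]; abel
  | tmul p q x y hx _ =>
    rw [d_tensorTwisting_add ttP ttA hcu hdcu hdcu' hx, hcomulP,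
      cup_tensorTwisting_rearrange ttP ttA ttC ttC' ttTT hcu hcu' ht ht0 ht' ht0',
      hl x, hr x, hl' y, hr' y, hteq x, hteq' y, add_sub_cancel_right]
end
end
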